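/- arXiv:2508.02713 — 2 statements merged into one kernel-verified Lean document; each statement's English description precedes it below -/
import Mathlib

section
/- Let L and n be positive integers, let ρ ∈ ℝ^L with ρ_l > 0 for every l, and let the mass matrix be M = m·I_{Ln} with m > 0. Let p̂, q̂ ∈ ℝ^{Ln} be block vectors whose blocks satisfy the power constraints p̂_l^T p̂_l = ρ_l for all l ∈ {1,…,L}, and let v ∈ ℝ^{Ln} be an arbitrary vector (representing the gradient ∇g(p̂) of the objective). Set C = diag(ρ_1,…,ρ_L) and Q = Q(q̂) = vecdiag(q̂_1^T,…,q̂_L^T). Then the Lagrange multiplier vector λ = C^{-1} ( M^{-1} Q q̂ − M G(p̂) M^{-1} v ) ∈ ℝ^L satisfies the hidden-constraint equation M^{-2} Q q̂ − G(p̂) M^{-1} ( v + G(p̂)^T λ ) = 0. -/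
/-! The power constraints say exactly that `G(p̂) G(p̂)ᵀ = C`, so `G(p̂) M⁻¹ Gᵀ(p̂) λ = m⁻¹ C λ`,
and by the choice of `λ` this cancels the gradient term `G(p̂) M⁻¹ v`. -/

open Matrix

/-- The constraint Jacobian `G(p̂) = vecdiag(p̂₁ᵀ,…,p̂_Lᵀ)`: the `L × Ln`
block-diagonal matrix whose entry in row `l` and column `(l', j)` equals
`p̂_{l',j}` if `l' = l` and `0` otherwise. -/
def Gmat {L n : ℕ} (p : Fin L × Fin n → ℝ) :
    Matrix (Fin L) (Fin L × Fin n) ℝ :=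
  fun l lj => if lj.1 = l then p lj else 0

theorem Gmat_mul_transpose {L n : ℕ} (p : Fin L × Fin n → ℝ) :
    Gmat p * (Gmat p)ᵀ = diagonal fun l => ∑ j, p (l, j) * p (l, j) := by
  ext l l'
  simp only [mul_apply, transpose_apply, Gmat, diagonal_apply, Fintype.sum_prod_type]
  split_ifs with h
  · subst h; simp
  · simp [Finset.sum_ite_eq', Ne.symm h]

theorem diagonal_mulVec_inv_mulVec {ι : Type*} [Fintype ι] [DecidableEq ι] {ρ : ι → ℝ}
    (hρ : ∀ i, ρ i ≠ 0) (x : ι → ℝ) : diagonal ρ *ᵥ ((diagonal ρ)⁻¹ *ᵥ x) = x := by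
  have hunit : IsUnit (diagonal ρ).det := by
    rw [det_diagonal]
    exact (Finset.prod_ne_zero_iff.mpr fun i _ => hρ i).isUnit
  rw [mulVec_mulVec, mul_nonsing_inv _ hunit, one_mulVec]

theorem stmt0_general (L n : ℕ) (ρ : Fin L → ℝ)
    (hρ : ∀ l, 0 < ρ l) (m : ℝ) (hm : 0 < m)
    (p q v : Fin L × Fin n → ℝ)
    (hp : ∀ l, ∑ j, p (l, j) * p (l, j) = ρ l)
    (lam : Fin L → ℝ)
    (hlam : lam = (Matrix.diagonal ρ)⁻¹ *ᵥ
      (m⁻¹ • (Gmat q *ᵥ q) - m • (Gmat p *ᵥ (m⁻¹ • v)))) :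
    (m⁻¹ * m⁻¹) • (Gmat q *ᵥ q)
      - Gmat p *ᵥ (m⁻¹ • (v + (Gmat p)ᵀ *ᵥ lam)) = 0 := by
  have hGGt : Gmat p * (Gmat p)ᵀ = diagonal ρ := by
    rw [Gmat_mul_transpose]; simp only [hp]
  have hCLam : diagonal ρ *ᵥ lam = m⁻¹ • (Gmat q *ᵥ q) - Gmat p *ᵥ v := by
    rw [hlam, diagonal_mulVec_inv_mulVec (fun l => (hρ l).ne'), mulVec_smul,
      smul_inv_smul₀ hm.ne']
  rw [mulVec_smul, mulVec_add, mulVec_mulVec, hGGt, hCLam, mul_smul]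
  module

theorem stmt0 (L n : ℕ) (hL : 0 < L) (hn : 0 < n) (ρ : Fin L → ℝ)
    (hρ : ∀ l, 0 < ρ l) (m : ℝ) (hm : 0 < m)
    (p q v : Fin L × Fin n → ℝ)
    (hp : ∀ l, ∑ j, p (l, j) * p (l, j) = ρ l)
    (lam : Fin L → ℝ)
    (hlam : lam = (Matrix.diagonal ρ)⁻¹ *ᵥ
      (m⁻¹ • (Gmat q *ᵥ q) - m • (Gmat p *ᵥ (m⁻¹ • v)))) :
    (m⁻¹ * m⁻¹) • (Gmat q *ᵥ q)
      - Gmat p *ᵥ (m⁻¹ • (v + (Gmat p)ᵀ *ᵥ lam)) = 0 :=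
  stmt0_general L n ρ hρ m hm p q v hp lam hlam
end

section
/- Let L and n be positive integers, let ρ ∈ ℝ^L with ρ_l > 0 for every l, let h > 0 and γ ∈ ℝ. Let p̂ ∈ ℝ^{Ln} be a block vector whose blocks satisfy p̂_l^T p̂_l = ρ_l for all l, let q̂_{1/2} ∈ ℝ^{Ln} (the half-step momentum) and v ∈ ℝ^{Ln} (representing ∇g(p̂)) be arbitrary, and set C = diag(ρ_1,…,ρ_L). Define μ = C^{-1} ( 2 G(p̂) q̂_{1/2} − h G(p̂) v ) / h ∈ ℝ^L. Then the updated momentum q̂⁺ := e^{−γ h / 2} ( q̂_{1/2} − (h/2)( v + G(p̂)^T μ ) ) satisfies the momentum-level constraint G(p̂) q̂⁺ = 0. -/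
/-!
The blocks of `G(p̂)` have disjoint supports, so `G(p̂) G(p̂)ᵀ = diag(p̂_lᵀ p̂_l) = C`. Hence
`G(p̂) q̂⁺ = e^{-γh/2} (G q̂_{1/2} - (h/2) G v - (h/2) C μ)`, and `μ` is chosen exactly so that
`(h/2) C μ = G q̂_{1/2} - (h/2) G v`.
-/

open Matrix

theorem stmt1_general (L n : ℕ) (ρ : Fin L → ℝ)
    (hρ : ∀ l, 0 < ρ l) (h γ : ℝ) (hh : 0 < h)
    (p qhalf v : Fin L × Fin n → ℝ)
    (hp : ∀ l, ∑ j, p (l, j) * p (l, j) = ρ l)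
    (μ : Fin L → ℝ)
    (hμ : μ = (Matrix.diagonal ρ)⁻¹ *ᵥ
      (h⁻¹ • ((2 : ℝ) • (Gmat p *ᵥ qhalf) - h • (Gmat p *ᵥ v)))) :
    Gmat p *ᵥ (Real.exp (-γ * h / 2) •
      (qhalf - (h / 2) • (v + (Gmat p)ᵀ *ᵥ μ))) = 0 := by
  have hGGt : Gmat p * (Gmat p)ᵀ = diagonal ρ := by
    rw [Gmat_mul_transpose]
    exact congrArg diagonal (funext hp)
  have hC : IsUnit (diagonal ρ).det := by
    rw [det_diagonal]
    exact (Finset.prod_pos fun l _ => hρ l).ne'.isUnit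
  have hCμ : diagonal ρ *ᵥ μ = h⁻¹ • ((2 : ℝ) • (Gmat p *ᵥ qhalf) - h • (Gmat p *ᵥ v)) := by
    rw [hμ, mulVec_mulVec, mul_nonsing_inv _ hC, one_mulVec]
  rw [mulVec_smul, mulVec_sub, mulVec_smul, mulVec_add, mulVec_mulVec, hGGt, hCμ]
  refine smul_eq_zero_of_right _ ?_
  have : h ≠ 0 := hh.ne'
  match_scalars <;> field_simp <;> ring

theorem stmt1 (L n : ℕ) (hL : 0 < L) (hn : 0 < n) (ρ : Fin L → ℝ)
    (hρ : ∀ l, 0 < ρ l) (h γ : ℝ) (hh : 0 < h)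
    (p qhalf v : Fin L × Fin n → ℝ)
    (hp : ∀ l, ∑ j, p (l, j) * p (l, j) = ρ l)
    (μ : Fin L → ℝ)
    (hμ : μ = (Matrix.diagonal ρ)⁻¹ *ᵥ
      (h⁻¹ • ((2 : ℝ) • (Gmat p *ᵥ qhalf) - h • (Gmat p *ᵥ v)))) :
    Gmat p *ᵥ (Real.exp (-γ * h / 2) •
      (qhalf - (h / 2) • (v + (Gmat p)ᵀ *ᵥ μ))) = 0 :=
  stmt1_general L n ρ hρ h γ hh p qhalf v hp μ hμ
end
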